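/- Fix an integer N ≥ 1, reals σh², σw² > 0, and P_F, P_D ∈ (0,1). Define α_F = P_F·σh²/(P_F·σh² + σw²·N) and α_D = P_D·σh²/(P_D·σh² + σw²·N). For each integer K ≥ 1 define the probability measure ν_K^{(0)} on ℝ^{2N} as the Gaussian mixture ν_K^{(0)} = Σ_{ℓ=0}^{K} C(K,ℓ)·P_F^ℓ·(1−P_F)^{K−ℓ} · Π_{i=1}^{2N} 𝒩(0, u_ℓ), where u_ℓ = (ℓ·σh²/(K·N) + σw²)/(2·P_F·σh²), and similarly ν_K^{(1)} with mixing weights C(K,ℓ)·P_D^ℓ·(1−P_D)^{K−ℓ} and the same variances u_ℓ. Then, as K → ∞, ν_K^{(0)} converges weakly to Π_{i=1}^{2N} 𝒩(0, 1/(2·N·α_F)), and ν_K^{(1)} converges weakly to Π_{i=1}^{2N} 𝒩(0, P_D/(2·P_F·N·α_D)). -/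

import Mathlib

open MeasureTheory ProbabilityTheory Filter

open scoped unitInterval Topology

/-!
Conditionally on `ℓ`, the law is the product Gaussian with variance `V (ℓ / K)`, where
`V t = (t σh² / N + σw²) / (2 P_F σh²)` is continuous. Hence `∫ f dν_K` is the `K`-th Bernstein
polynomial, evaluated at `P_F` (resp. `P_D`), of the continuous function
`t ↦ ∫ f d𝒩(0, V t)^{⊗2N}`, and Bernstein's theorem gives convergence to its value at `P_F`
(resp. `P_D`). Finally `V P_F = 1 / (2 N α_F)` and `V P_D = P_D / (2 P_F N α_D)`.
-/

theorem tendsto_sum_binomial_mul_comp_div {g : ℝ → ℝ} (hg : Continuous g) {p : ℝ}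
    (hp : p ∈ Set.Icc (0 : ℝ) 1) :
    Tendsto (fun K : ℕ => ∑ ℓ ∈ Finset.range (K + 1),
        (K.choose ℓ * p ^ ℓ * (1 - p) ^ (K - ℓ)) * g (ℓ / K)) atTop (𝓝 (g p)) := by
  let h : C(I, ℝ) := ⟨g ∘ Subtype.val, hg.comp continuous_subtype_val⟩
  have hB := ((continuous_eval_const (⟨p, hp⟩ : I)).tendsto h).comp
    (bernsteinApproximation_uniform h)
  refine hB.congr fun K => ?_
  simp only [Function.comp_apply, bernsteinApproximation.apply, bernstein_apply, smul_eq_mul,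
    Finset.sum_range fun ℓ => (K.choose ℓ * p ^ ℓ * (1 - p) ^ (K - ℓ)) * g (ℓ / K)]
  rfl

noncomputable def binomialMixture {X : Type*} [MeasurableSpace X] (μ : ℝ → Measure X) (K : ℕ)
    (p : ℝ) : Measure X :=
  ∑ ℓ ∈ Finset.range (K + 1), ENNReal.ofReal (K.choose ℓ * p ^ ℓ * (1 - p) ^ (K - ℓ)) • μ (ℓ / K)

section binomialMixture

variable {X : Type*} [MeasurableSpace X] {μ : ℝ → Measure X} {f : X → ℝ} {p : ℝ}

theorem integral_binomialMixture (hf : ∀ t, Integrable f (μ t)) (hp : p ∈ Set.Icc (0 : ℝ) 1)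
    (K : ℕ) :
    ∫ x, f x ∂binomialMixture μ K p = ∑ ℓ ∈ Finset.range (K + 1),
        (K.choose ℓ * p ^ ℓ * (1 - p) ^ (K - ℓ)) * ∫ x, f x ∂μ (ℓ / K) := by
  rw [binomialMixture, integral_finsetSum_measure fun ℓ _ =>
    (hf _).smul_measure ENNReal.ofReal_ne_top]
  refine Finset.sum_congr rfl fun ℓ _ => ?_
  have hq : 0 ≤ 1 - p := sub_nonneg.2 hp.2
  have hw : 0 ≤ (K.choose ℓ : ℝ) * p ^ ℓ * (1 - p) ^ (K - ℓ) := by have := hp.1; positivity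
  rw [integral_smul_measure, ENNReal.toReal_ofReal hw, smul_eq_mul]

theorem tendsto_integral_binomialMixture (hf : ∀ t, Integrable f (μ t))
    (hcont : Continuous fun t => ∫ x, f x ∂μ t) (hp : p ∈ Set.Icc (0 : ℝ) 1) :
    Tendsto (fun K => ∫ x, f x ∂binomialMixture μ K p) atTop (𝓝 (∫ x, f x ∂μ p)) := by
  simp_rw [integral_binomialMixture hf hp]
  exact tendsto_sum_binomial_mul_comp_div hcont hp

end binomialMixture

theorem gaussianReal_toNNReal_eq_map_sqrt_mul (v : ℝ) :
    gaussianReal 0 v.toNNReal = (gaussianReal 0 1).map (Real.sqrt v * ·) := by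
  rw [gaussianReal_map_const_mul, mul_zero, mul_one]
  congr
  ext
  rcases le_total 0 v with hv | hv
  · simp [Real.sq_sqrt hv, hv]
  · simp [Real.sqrt_eq_zero_of_nonpos hv, hv]

theorem continuous_integral_pi_gaussianReal {ι : Type*} [Fintype ι]
    (f : BoundedContinuousFunction (ι → ℝ) ℝ) :
    Continuous fun v : ℝ => ∫ x, f x ∂Measure.pi fun _ : ι => gaussianReal 0 v.toNNReal := by
  have hscale : Continuous fun p : ℝ × (ι → ℝ) => fun i => Real.sqrt p.1 * p.2 i :=
    continuous_pi fun i =>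
      (Real.continuous_sqrt.comp continuous_fst).mul ((continuous_apply i).comp continuous_snd)
  have hpi : ∀ v : ℝ, (Measure.pi fun _ : ι => gaussianReal 0 v.toNNReal) =
      (Measure.pi fun _ : ι => gaussianReal 0 1).map (fun x i => Real.sqrt v * x i) := by
    intro v
    simp_rw [gaussianReal_toNNReal_eq_map_sqrt_mul v]
    exact (Measure.pi_map_pi fun _ => (measurable_const_mul _).aemeasurable).symm
  simp_rw [hpi]
  have hmeas : ∀ v : ℝ, AEMeasurable (fun (x : ι → ℝ) i => Real.sqrt v * x i)
      (Measure.pi fun _ : ι => gaussianReal 0 1) := fun v =>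
    (hscale.comp (Continuous.prodMk_right v)).measurable.aemeasurable
  simp_rw [fun v => integral_map (hmeas v) f.continuous.aestronglyMeasurable]
  refine continuous_of_dominated (bound := fun _ => ‖f‖)
    (fun v => (f.continuous.comp (hscale.comp (Continuous.prodMk_right v))).aestronglyMeasurable)
    (fun v => .of_forall fun x => f.norm_coe_le_norm _) (integrable_const _)
    (.of_forall fun x => f.continuous.comp (hscale.comp (Continuous.prodMk_left x)))

theorem tendsto_integral_binomialMixture_pi_gaussianReal {ι : Type*} [Fintype ι] {V : ℝ → ℝ}
    (hV : Continuous V) (f : BoundedContinuousFunction (ι → ℝ) ℝ) {p : ℝ}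
    (hp : p ∈ Set.Icc (0 : ℝ) 1) :
    Tendsto (fun K => ∫ x, f x ∂binomialMixture
        (fun t => Measure.pi fun _ : ι => gaussianReal 0 (V t).toNNReal) K p) atTop
      (𝓝 (∫ x, f x ∂Measure.pi fun _ : ι => gaussianReal 0 (V p).toNNReal)) :=
  tendsto_integral_binomialMixture (fun _ => f.integrable _)
    ((continuous_integral_pi_gaussianReal f).comp hV) hp

theorem stmt_9_general (N : ℕ) (hN : 1 ≤ N) (σh2 σw2 : ℝ)
    (PF PD : ℝ) (hPF : PF ∈ Set.Ioo (0 : ℝ) 1) (hPD : PD ∈ Set.Ioo (0 : ℝ) 1)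
    (αF αD : ℝ)
    (hαF : αF = PF * σh2 / (PF * σh2 + σw2 * N))
    (hαD : αD = PD * σh2 / (PD * σh2 + σw2 * N))
    (u : ℕ → ℕ → ℝ)
    (hu : ∀ K ℓ, u K ℓ = (ℓ * σh2 / (K * N) + σw2) / (2 * PF * σh2))
    (ν0 ν1 : ℕ → Measure (Fin (2 * N) → ℝ))
    (hν0 : ∀ K, ν0 K = ∑ ℓ ∈ Finset.range (K + 1),
        (ENNReal.ofReal ((K.choose ℓ : ℝ) * PF ^ ℓ * (1 - PF) ^ (K - ℓ))) •
          Measure.pi (fun _ : Fin (2 * N) => gaussianReal 0 (u K ℓ).toNNReal))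
    (hν1 : ∀ K, ν1 K = ∑ ℓ ∈ Finset.range (K + 1),
        (ENNReal.ofReal ((K.choose ℓ : ℝ) * PD ^ ℓ * (1 - PD) ^ (K - ℓ))) •
          Measure.pi (fun _ : Fin (2 * N) => gaussianReal 0 (u K ℓ).toNNReal)) :
    (∀ f : BoundedContinuousFunction (Fin (2 * N) → ℝ) ℝ,
        Tendsto (fun K : ℕ => ∫ x, f x ∂(ν0 K)) atTop
          (nhds (∫ x, f x ∂(Measure.pi (fun _ : Fin (2 * N) =>
            gaussianReal 0 (Real.toNNReal (1 / (2 * N * αF)))))))) ∧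
    (∀ f : BoundedContinuousFunction (Fin (2 * N) → ℝ) ℝ,
        Tendsto (fun K : ℕ => ∫ x, f x ∂(ν1 K)) atTop
          (nhds (∫ x, f x ∂(Measure.pi (fun _ : Fin (2 * N) =>
            gaussianReal 0 (Real.toNNReal (PD / (2 * PF * N * αD)))))))) := by
  have hNpos : (0 : ℝ) < N := by exact_mod_cast hN
  set V : ℝ → ℝ := fun t => (t * σh2 / N + σw2) / (2 * PF * σh2) with hV
  have hmix : ∀ (p : ℝ) (ν : ℕ → Measure (Fin (2 * N) → ℝ)), p ∈ Set.Ioo (0 : ℝ) 1 →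
      (∀ K, ν K = ∑ ℓ ∈ Finset.range (K + 1),
        (ENNReal.ofReal ((K.choose ℓ : ℝ) * p ^ ℓ * (1 - p) ^ (K - ℓ))) •
          Measure.pi (fun _ : Fin (2 * N) => gaussianReal 0 (u K ℓ).toNNReal)) →
      ∀ f : BoundedContinuousFunction (Fin (2 * N) → ℝ) ℝ,
        Tendsto (fun K : ℕ => ∫ x, f x ∂(ν K)) atTop (𝓝 (∫ x, f x ∂(Measure.pi
          (fun _ : Fin (2 * N) => gaussianReal 0 (V p).toNNReal)))) := by
    intro p ν hp hν f
    have hu_eq : ∀ K ℓ : ℕ, u K ℓ = V (ℓ / K) := fun K ℓ => by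
      simp only [hu, V, div_mul_eq_mul_div, div_div]
    simp_rw [hν, hu_eq]
    exact tendsto_integral_binomialMixture_pi_gaussianReal (by fun_prop) f
      (Set.Ioo_subset_Icc_self hp)
  have hVF : 1 / (2 * N * αF) = V PF := by
    rw [hαF, hV]
    have hPF0 : PF ≠ 0 := hPF.1.ne'
    field_simp
  have hVD : PD / (2 * PF * N * αD) = V PD := by
    rw [hαD, hV]
    have hPF0 : PF ≠ 0 := hPF.1.ne'
    have hPD0 : PD ≠ 0 := hPD.1.ne'
    field_simp
  rw [hVF, hVD]
  exact ⟨hmix PF ν0 hPF hν0, hmix PD ν1 hPD hν1⟩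

/-- Theorem 4 (TPC case): the Gaussian-mixture laws of the normalized received
vector under a total power constraint converge weakly, as `K → ∞`, to the
product Gaussian laws `Π 𝒩(0, 1/(2 N α_F))` under `H₀` and
`Π 𝒩(0, P_D/(2 P_F N α_D))` under `H₁`. -/
theorem stmt_9 (N : ℕ) (hN : 1 ≤ N) (σh2 σw2 : ℝ) (hσh : 0 < σh2) (hσw : 0 < σw2)
    (PF PD : ℝ) (hPF : PF ∈ Set.Ioo (0 : ℝ) 1) (hPD : PD ∈ Set.Ioo (0 : ℝ) 1)
    (αF αD : ℝ)
    (hαF : αF = PF * σh2 / (PF * σh2 + σw2 * N))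
    (hαD : αD = PD * σh2 / (PD * σh2 + σw2 * N))
    (u : ℕ → ℕ → ℝ)
    (hu : ∀ K ℓ, u K ℓ = (ℓ * σh2 / (K * N) + σw2) / (2 * PF * σh2))
    (ν0 ν1 : ℕ → Measure (Fin (2 * N) → ℝ))
    (hν0 : ∀ K, ν0 K = ∑ ℓ ∈ Finset.range (K + 1),
        (ENNReal.ofReal ((K.choose ℓ : ℝ) * PF ^ ℓ * (1 - PF) ^ (K - ℓ))) •
          Measure.pi (fun _ : Fin (2 * N) => gaussianReal 0 (u K ℓ).toNNReal))
    (hν1 : ∀ K, ν1 K = ∑ ℓ ∈ Finset.range (K + 1),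
        (ENNReal.ofReal ((K.choose ℓ : ℝ) * PD ^ ℓ * (1 - PD) ^ (K - ℓ))) •
          Measure.pi (fun _ : Fin (2 * N) => gaussianReal 0 (u K ℓ).toNNReal)) :
    (∀ f : BoundedContinuousFunction (Fin (2 * N) → ℝ) ℝ,
        Tendsto (fun K : ℕ => ∫ x, f x ∂(ν0 K)) atTop
          (nhds (∫ x, f x ∂(Measure.pi (fun _ : Fin (2 * N) =>
            gaussianReal 0 (Real.toNNReal (1 / (2 * N * αF)))))))) ∧
    (∀ f : BoundedContinuousFunction (Fin (2 * N) → ℝ) ℝ,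
        Tendsto (fun K : ℕ => ∫ x, f x ∂(ν1 K)) atTop
          (nhds (∫ x, f x ∂(Measure.pi (fun _ : Fin (2 * N) =>
            gaussianReal 0 (Real.toNNReal (PD / (2 * PF * N * αD)))))))) :=
  stmt_9_general N hN σh2 σw2 PF PD hPF hPD αF αD hαF hαD u hu ν0 ν1 hν0 hν1
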